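/- Uniqueness for the limiting BBGKY hierarchy: let C ≥ 1, T > 0, and let (γ^(k))_{k≥1} and (γ̃^(k))_{k≥1} be two families of continuous functions γ^(k), γ̃^(k) : [0,T]×[0,1]^k → ℝ, each satisfying the limiting BBGKY hierarchy on [0,T], such that γ^(k)(0,·) = γ̃^(k)(0,·) for every k and sup_{t∈[0,T], x⃗∈[0,1]^k} |γ^(k)(t,x⃗)| ≤ C^k and sup_{t∈[0,T], x⃗∈[0,1]^k} |γ̃^(k)(t,x⃗)| ≤ C^k for every k ≥ 1. Then γ^(k)(t,x⃗) = γ̃^(k)(t,x⃗) for every k ≥ 1, t ∈ [0,T] and x⃗ ∈ [0,1]^k. -/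

import Mathlib

/-!
The difference `δᵏ = γᵏ - γ'ᵏ` satisfies the hierarchy with zero initial data. The Neumann
semigroup is positive with kernel mass at most one, so it does not increase sup norms. If `δ`
vanishes up to time `a`, iterating the Duhamel formula `n` times and bounding the
`k (k+1) ⋯ (k+n-1) ≤ (k+n)ⁿ` collision terms gives
`|δᵏ(t)| ≤ 2 Cᵏ⁺ⁿ (k+n)ⁿ (t-a)ⁿ / n!`. Since `(k+n)ⁿ/n! ≤ eᵏ⁺ⁿ` and `e < 3`, this tends to `0`
as `n → ∞` whenever `t - a ≤ (3C)⁻¹`. Stepping through `[0,T]` in windows of length `(3C)⁻¹`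
gives `δ = 0`.
-/

open MeasureTheory Real

/-- Centered Gaussian density with variance `t`. -/
noncomputable def gaussD (t x : ℝ) : ℝ :=
  (2 * Real.pi * t) ^ (-(1:ℝ)/2) * Real.exp (-x ^ 2 / (2 * t))

/-- The Neumann heat kernel on `[0,1]` (transition density of reflected BM). -/
noncomputable def heatK (t x y : ℝ) : ℝ :=
  ∑' n : ℤ, (gaussD t (x - y + 2 * (n : ℝ)) + gaussD t (x + y + 2 * (n : ℝ)))

/-- The unit box `[0,1]^k`. -/
def unitBox (k : ℕ) : Set (Fin k → ℝ) := Set.univ.pi fun _ => Set.Icc (0:ℝ) 1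

/-- The `k`-fold Neumann heat semigroup:
`P^(k)_t Φ(x) = ∫_{[0,1]^k} Φ(y) ∏ᵢ p(t,xᵢ,yᵢ) dy` for `t > 0`, and `P^(k)_0 Φ = Φ`. -/
noncomputable def Ptk (k : ℕ) (t : ℝ) (Φ : (Fin k → ℝ) → ℝ) (x : Fin k → ℝ) : ℝ :=
  if t = 0 then Φ x else ∫ y in unitBox k, Φ y * ∏ i, heatK t (x i) (y i)

/-- A family `(γ^(k))_{k≥1}` of continuous functions on `[0,T]×[0,1]^k` satisfies the
limiting BBGKY hierarchy on `[0,T]` if for every `k ≥ 1`, `t ∈ [0,T]`, `x⃗ ∈ [0,1]^k`,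
`γ^(k)(t,x⃗) = P^(k)_t γ^(k)(0,·)(x⃗)
  − Σᵢ ∫₀ᵗ P^(k)_{t−s}( z⃗ ↦ γ^(k+1)(s,(z₁,…,z_k,zᵢ)) )(x⃗) ds`. -/
def SatisfiesLimitingHierarchy (T : ℝ) (γ : (k : ℕ) → ℝ → (Fin k → ℝ) → ℝ) : Prop :=
  (∀ k : ℕ, 1 ≤ k →
    ContinuousOn (fun q : ℝ × (Fin k → ℝ) => γ k q.1 q.2)
      (Set.Icc (0:ℝ) T ×ˢ unitBox k)) ∧
  ∀ k : ℕ, 1 ≤ k → ∀ t ∈ Set.Icc (0:ℝ) T, ∀ x ∈ unitBox k,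
    γ k t x = Ptk k t (γ k 0) x
      - ∑ i : Fin k, ∫ s in (0:ℝ)..t,
          Ptk k (t - s) (fun z => γ (k+1) s (Fin.snoc z (z i))) x

open Set Filter ProbabilityTheory
open scoped ENNReal Nat Topology

lemma gaussD_eq_gaussianPDFReal {t : ℝ} (ht : 0 ≤ t) : gaussD t = gaussianPDFReal 0 t.toNNReal := by
  ext x
  rw [gaussD, gaussianPDFReal, Real.coe_toNNReal t ht, sub_zero, Real.sqrt_eq_rpow,
    ← Real.rpow_neg (by positivity)]
  norm_num

lemma heatK_nonneg {t : ℝ} (ht : 0 ≤ t) (x y : ℝ) : 0 ≤ heatK t x y :=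
  tsum_nonneg fun n => by
    simp only [gaussD_eq_gaussianPDFReal ht]
    exact add_nonneg (gaussianPDFReal_nonneg _ _ _) (gaussianPDFReal_nonneg _ _ _)

lemma measurable_heatK (x : ℝ) : Measurable fun p : ℝ × ℝ => heatK p.1 x p.2 :=
  Measurable.tsum fun n => by unfold gaussD; fun_prop

lemma ENNReal.ofReal_tsum_le {ι : Type*} {f : ι → ℝ} (hf : ∀ i, 0 ≤ f i) :
    ENNReal.ofReal (∑' i, f i) ≤ ∑' i, ENNReal.ofReal (f i) := by
  by_cases h : Summable f
  · rw [ENNReal.ofReal_tsum_of_nonneg hf h]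
  · simp [tsum_eq_zero_of_not_summable h]

/-- Method of images: the translates of `[0,1]` by `2ℤ` and their reflections tile `ℝ`. -/
lemma lintegral_tsum_images (f : ℝ → ℝ≥0∞) (hf : Measurable f) (x : ℝ) :
    ∫⁻ y in Ioc 0 1, ∑' n : ℤ, (f (x - y + 2 * n) + f (x + y + 2 * n)) = ∫⁻ u, f u := by
  have hunion := iUnion_Ioc_add_zsmul (p := (2 : ℝ)) two_pos (x - 1)
  have hdisj := pairwise_disjoint_Ioc_add_zsmul (x - 1) (2 : ℝ)
  rw [lintegral_tsum (fun n => by fun_prop), ← setLIntegral_univ, ← hunion,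
    lintegral_iUnion (fun _ => measurableSet_Ioc) hdisj]
  refine tsum_congr fun n => ?_
  set c : ℝ := x + 2 * n
  have hreflect : ∫⁻ y in Ioc 0 1, f (c - y) = ∫⁻ u in Ioc (c - 1) c, f u := by
    rw [(Measure.measurePreserving_sub_left volume c).setLIntegral_comp_emb
      (Homeomorph.subLeft c).measurableEmbedding, image_const_sub_Ioc, sub_zero,
      Measure.restrict_congr_set Ico_ae_eq_Ioc]
  have htranslate : ∫⁻ y in Ioc 0 1, f (c + y) = ∫⁻ u in Ioc c (c + 1), f u := by
    rw [(measurePreserving_add_left volume c).setLIntegral_comp_emb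
      (Homeomorph.addLeft c).measurableEmbedding, image_const_add_Ioc, add_zero]
  have hsplit :
      Ioc (x - 1 + n • (2 : ℝ)) (x - 1 + (n + 1) • 2) = Ioc (c - 1) c ∪ Ioc c (c + 1) := by
    rw [Ioc_union_Ioc_eq_Ioc (by linarith) (by linarith)]
    simp only [c, zsmul_eq_mul]; push_cast; congr 1 <;> ring
  simp_rw [show ∀ y, x - y + 2 * (n : ℝ) = c - y from fun y => by ring,
    show ∀ y, x + y + 2 * (n : ℝ) = c + y from fun y => by ring]
  rw [lintegral_add_left (by fun_prop), hreflect, htranslate, hsplit,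
    lintegral_union measurableSet_Ioc (Ioc_disjoint_Ioc_of_le le_rfl)]

lemma lintegral_heatK_le {t : ℝ} (ht : 0 < t) (x : ℝ) :
    ∫⁻ y in Icc 0 1, ENNReal.ofReal (heatK t x y) ≤ 1 := by
  have hg : ∀ u, 0 ≤ gaussD t u := by
    simp only [gaussD_eq_gaussianPDFReal ht.le]; exact gaussianPDFReal_nonneg _ _
  calc ∫⁻ y in Icc 0 1, ENNReal.ofReal (heatK t x y)
      = ∫⁻ y in Ioc 0 1, ENNReal.ofReal (heatK t x y) := by
        rw [Measure.restrict_congr_set (Ioc_ae_eq_Icc (a := (0 : ℝ)) (b := 1)).symm]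
    _ ≤ ∫⁻ y in Ioc 0 1, ∑' n : ℤ, (ENNReal.ofReal (gaussD t (x - y + 2 * n)) +
          ENNReal.ofReal (gaussD t (x + y + 2 * n))) := by
        refine lintegral_mono fun y => (ENNReal.ofReal_tsum_le fun n => ?_).trans_eq ?_
        · exact add_nonneg (hg _) (hg _)
        · exact tsum_congr fun n => ENNReal.ofReal_add (hg _) (hg _)
    _ = ∫⁻ u, ENNReal.ofReal (gaussD t u) :=
        lintegral_tsum_images (fun u => ENNReal.ofReal (gaussD t u)) (by unfold gaussD; fun_prop) x
    _ = 1 := by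
        rw [gaussD_eq_gaussianPDFReal ht.le]
        exact lintegral_gaussianPDFReal_eq_one 0 (by simpa using ht)

lemma integrableOn_heatK {t : ℝ} (ht : 0 < t) (x : ℝ) : IntegrableOn (heatK t x) (Icc 0 1) :=
  ⟨((measurable_heatK x).comp measurable_prodMk_left).aestronglyMeasurable, by
    rw [hasFiniteIntegral_iff_ofReal (ae_of_all _ (heatK_nonneg ht.le x))]
    exact (lintegral_heatK_le ht x).trans_lt ENNReal.one_lt_top⟩

lemma setIntegral_heatK_le {t : ℝ} (ht : 0 < t) (x : ℝ) : ∫ y in Icc 0 1, heatK t x y ≤ 1 := by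
  rw [← ENNReal.ofReal_le_one, ofReal_integral_eq_lintegral_ofReal (integrableOn_heatK ht x)
    (ae_of_all _ (heatK_nonneg ht.le x))]
  exact lintegral_heatK_le ht x

lemma measurableSet_unitBox (k : ℕ) : MeasurableSet (unitBox k) :=
  MeasurableSet.univ_pi fun _ => measurableSet_Icc

lemma isCompact_unitBox (k : ℕ) : IsCompact (unitBox k) :=
  isCompact_univ_pi fun _ => isCompact_Icc

lemma volume_restrict_unitBox (k : ℕ) :
    volume.restrict (unitBox k) = Measure.pi fun _ => volume.restrict (Icc (0 : ℝ) 1) := by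
  rw [unitBox, volume_pi, Measure.restrict_pi_pi]

section Semigroup

variable {k : ℕ} {τ : ℝ} {Φ Ψ : (Fin k → ℝ) → ℝ} {x : Fin k → ℝ}

lemma integrableOn_prod_heatK (hτ : 0 < τ) (x : Fin k → ℝ) :
    IntegrableOn (fun y => ∏ i, heatK τ (x i) (y i)) (unitBox k) := by
  rw [IntegrableOn, volume_restrict_unitBox]
  exact Integrable.fintype_prod fun i => integrableOn_heatK hτ (x i)

lemma setIntegral_prod_heatK_le (hτ : 0 < τ) (x : Fin k → ℝ) :
    ∫ y in unitBox k, ∏ i, heatK τ (x i) (y i) ≤ 1 := by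
  rw [volume_restrict_unitBox, integral_fintype_prod_eq_prod]
  exact Finset.prod_le_one (fun i _ => setIntegral_nonneg measurableSet_Icc
    fun y _ => heatK_nonneg hτ.le _ _) fun i _ => setIntegral_heatK_le hτ (x i)

lemma abs_Ptk_le (hτ : 0 ≤ τ) {B : ℝ} (hΦ : ∀ y ∈ unitBox k, |Φ y| ≤ B) (hx : x ∈ unitBox k) :
    |Ptk k τ Φ x| ≤ B := by
  rcases hτ.eq_or_lt with rfl | hτ
  · simpa [Ptk] using hΦ x hx
  have hB : 0 ≤ B := (abs_nonneg _).trans (hΦ x hx)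
  have hK : ∀ y : Fin k → ℝ, 0 ≤ ∏ i, heatK τ (x i) (y i) := fun y =>
    Finset.prod_nonneg fun i _ => heatK_nonneg hτ.le _ _
  rw [Ptk, if_neg hτ.ne', ← Real.norm_eq_abs]
  calc ‖∫ y in unitBox k, Φ y * ∏ i, heatK τ (x i) (y i)‖
      ≤ ∫ y in unitBox k, B * ∏ i, heatK τ (x i) (y i) := by
        refine norm_integral_le_of_norm_le ((integrableOn_prod_heatK hτ x).const_mul B)
          (ae_restrict_of_forall_mem (measurableSet_unitBox k) fun y hy => ?_)
        rw [norm_mul, Real.norm_of_nonneg (hK y)]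
        exact mul_le_mul_of_nonneg_right (hΦ y hy) (hK y)
    _ = B * ∫ y in unitBox k, ∏ i, heatK τ (x i) (y i) := integral_const_mul _ _
    _ ≤ B := mul_le_of_le_one_right hB (setIntegral_prod_heatK_le hτ x)

lemma integrableOn_mul_prod_heatK (hτ : 0 < τ) (hΦ : ContinuousOn Φ (unitBox k))
    (x : Fin k → ℝ) : IntegrableOn (fun y => Φ y * ∏ i, heatK τ (x i) (y i)) (unitBox k) := by
  obtain ⟨B, hB⟩ := (isCompact_unitBox k).exists_bound_of_continuousOn hΦ
  exact (integrableOn_prod_heatK hτ x).bdd_mul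
    (hΦ.aestronglyMeasurable (measurableSet_unitBox k))
    (ae_restrict_of_forall_mem (measurableSet_unitBox k) hB)

lemma Ptk_sub (hτ : 0 ≤ τ) (hΦ : ContinuousOn Φ (unitBox k)) (hΨ : ContinuousOn Ψ (unitBox k))
    (x : Fin k → ℝ) : Ptk k τ (Φ - Ψ) x = Ptk k τ Φ x - Ptk k τ Ψ x := by
  rcases hτ.eq_or_lt with rfl | hτ
  · simp [Ptk]
  simp only [Ptk, if_neg hτ.ne', Pi.sub_apply, sub_mul]
  exact integral_sub (integrableOn_mul_prod_heatK hτ hΦ x) (integrableOn_mul_prod_heatK hτ hΨ x)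

lemma Ptk_congr (h : EqOn Φ Ψ (unitBox k)) (hx : x ∈ unitBox k) : Ptk k τ Φ x = Ptk k τ Ψ x := by
  unfold Ptk
  split_ifs
  · exact h hx
  · exact setIntegral_congr_fun (measurableSet_unitBox k) fun y hy => by rw [h hy]

end Semigroup

lemma abs_intervalIntegral_le_of_eqOn_zero {f : ℝ → ℝ} {a t c : ℝ} {n : ℕ} (ha : 0 ≤ a)
    (hat : a ≤ t) (hf : IntervalIntegrable f volume 0 t) (hzero : EqOn f 0 (Icc 0 a))
    (hbound : ∀ s ∈ Ioc a t, |f s| ≤ c * (s - a) ^ n) :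
    |∫ s in 0..t, f s| ≤ c * (t - a) ^ (n + 1) / (n + 1) := by
  have hamem : a ∈ uIcc 0 t := mem_uIcc_of_le ha hat
  have h0a := hf.mono_set (uIcc_subset_uIcc left_mem_uIcc hamem)
  have hat' := hf.mono_set (uIcc_subset_uIcc hamem right_mem_uIcc)
  have hvanish : ∫ s in 0..a, f s = 0 := by
    rw [intervalIntegral.integral_congr (g := fun _ => 0) (by rwa [uIcc_of_le ha]),
      intervalIntegral.integral_zero]
  rw [← intervalIntegral.integral_add_adjacent_intervals h0a hat', hvanish, zero_add,
    ← Real.norm_eq_abs]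
  calc ‖∫ s in a..t, f s‖ ≤ ∫ s in a..t, c * (s - a) ^ n :=
        intervalIntegral.norm_integral_le_of_norm_le (f := f) hat (ae_of_all _ hbound)
          (Continuous.intervalIntegrable (by fun_prop) _ _)
    _ = c * (t - a) ^ (n + 1) / (n + 1) := by
        rw [intervalIntegral.integral_const_mul,
          intervalIntegral.integral_comp_sub_right (fun s => s ^ n), integral_pow]
        ring

section Duhamel

variable {k : ℕ} {T : ℝ} {F F' : ℝ → (Fin k → ℝ) → ℝ} {x : Fin k → ℝ}

lemma intervalIntegrable_Ptk (hF : ContinuousOn (Function.uncurry F) (Icc 0 T ×ˢ unitBox k))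
    {t : ℝ} (ht : 0 ≤ t) (htT : t ≤ T) (hx : x ∈ unitBox k) :
    IntervalIntegrable (fun s => Ptk k (t - s) (F s) x) volume 0 t := by
  rcases ht.eq_or_lt with rfl | ht
  · exact IntervalIntegrable.refl
  have hIoo : Ioo 0 t ⊆ Icc 0 T := fun s hs => ⟨hs.1.le, hs.2.le.trans htT⟩
  obtain ⟨B, hB⟩ := (isCompact_Icc.prod (isCompact_unitBox k)).exists_bound_of_continuousOn hF
  have hmeas : AEStronglyMeasurable
      (fun s => ∫ y in unitBox k, F s y * ∏ i, heatK (t - s) (x i) (y i))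
      (volume.restrict (Ioo 0 t)) := by
    refine AEStronglyMeasurable.integral_prod_right' (f := fun p : ℝ × (Fin k → ℝ) =>
      F p.1 p.2 * ∏ i, heatK (t - p.1) (x i) (p.2 i)) ?_
    rw [Measure.prod_restrict]
    refine AEStronglyMeasurable.mul
      ((hF.mono (prod_mono hIoo subset_rfl)).aestronglyMeasurable
        (measurableSet_Ioo.prod (measurableSet_unitBox k)))
      (Measurable.aestronglyMeasurable ?_)
    exact Finset.measurable_prod _ fun i _ => (measurable_heatK (x i)).comp
      ((measurable_const.sub measurable_fst).prodMk ((measurable_pi_apply i).comp measurable_snd))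
  rw [intervalIntegrable_iff_integrableOn_Ioo_of_le ht.le]
  refine Integrable.of_bound (hmeas.congr ?_) B
    (ae_restrict_of_forall_mem measurableSet_Ioo fun s hs => ?_)
  · refine ae_restrict_of_forall_mem measurableSet_Ioo fun s hs => ?_
    simp only [Ptk, if_neg (sub_ne_zero.2 hs.2.ne')]
  · exact abs_Ptk_le (sub_nonneg.2 hs.2.le)
      (fun z hz => hB (s, z) ⟨hIoo hs, hz⟩) hx

lemma abs_integral_Ptk_sub_le (hF : ContinuousOn (Function.uncurry F) (Icc 0 T ×ˢ unitBox k))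
    (hF' : ContinuousOn (Function.uncurry F') (Icc 0 T ×ˢ unitBox k)) {a t c : ℝ} {n : ℕ}
    (ha : 0 ≤ a) (hat : a ≤ t) (htT : t ≤ T)
    (hagree : ∀ s ∈ Icc 0 a, EqOn (F s) (F' s) (unitBox k))
    (hbound : ∀ s ∈ Icc a T, ∀ z ∈ unitBox k, |F s z - F' s z| ≤ c * (s - a) ^ n)
    (hx : x ∈ unitBox k) :
    |(∫ s in 0..t, Ptk k (t - s) (F s) x) - ∫ s in 0..t, Ptk k (t - s) (F' s) x| ≤
      c * (t - a) ^ (n + 1) / (n + 1) := by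
  have ht : 0 ≤ t := ha.trans hat
  rw [← intervalIntegral.integral_sub (intervalIntegrable_Ptk hF ht htT hx)
    (intervalIntegrable_Ptk hF' ht htT hx)]
  refine abs_intervalIntegral_le_of_eqOn_zero ha hat
    ((intervalIntegrable_Ptk hF ht htT hx).sub (intervalIntegrable_Ptk hF' ht htT hx))
    (fun s hs => sub_eq_zero.2 (Ptk_congr (hagree s hs) hx)) fun s hs => ?_
  have hsT : s ∈ Icc 0 T := ⟨ha.trans hs.1.le, hs.2.trans htT⟩
  rw [← Ptk_sub (sub_nonneg.2 hs.2) (hF.uncurry_left s hsT) (hF'.uncurry_left s hsT)]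
  exact abs_Ptk_le (sub_nonneg.2 hs.2)
    (fun z hz => hbound s ⟨hs.1.le, hs.2.trans htT⟩ z hz) hx

end Duhamel

lemma snoc_self_mem_unitBox {k : ℕ} {z : Fin k → ℝ} (hz : z ∈ unitBox k) (i : Fin k) :
    (Fin.snoc z (z i) : Fin (k + 1) → ℝ) ∈ unitBox (k + 1) := by
  intro j _
  induction j using Fin.lastCases with
  | last => simpa using hz i (mem_univ i)
  | cast j => simpa using hz j (mem_univ j)

lemma ContinuousOn.uncurry_snoc_self {k : ℕ} {S : Set ℝ} {G : ℝ → (Fin (k + 1) → ℝ) → ℝ}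
    (hG : ContinuousOn (Function.uncurry G) (S ×ˢ unitBox (k + 1))) (i : Fin k) :
    ContinuousOn (Function.uncurry fun s (z : Fin k → ℝ) => G s (Fin.snoc z (z i)))
      (S ×ˢ unitBox k) :=
  hG.comp (continuous_fst.prodMk (continuous_snd.finSnoc
    ((continuous_apply i).comp continuous_snd))).continuousOn
    fun _ hp => ⟨hp.1, snoc_self_mem_unitBox hp.2 i⟩

noncomputable def duhamelTerm (k : ℕ) (G : ℝ → (Fin (k + 1) → ℝ) → ℝ) (t : ℝ) (x : Fin k → ℝ) : ℝ :=
  ∑ i : Fin k, ∫ s in (0 : ℝ)..t, Ptk k (t - s) (fun z => G s (Fin.snoc z (z i))) x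

lemma abs_duhamelTerm_sub_le {k : ℕ} {T : ℝ} {G G' : ℝ → (Fin (k + 1) → ℝ) → ℝ}
    (hG : ContinuousOn (Function.uncurry G) (Icc 0 T ×ˢ unitBox (k + 1)))
    (hG' : ContinuousOn (Function.uncurry G') (Icc 0 T ×ˢ unitBox (k + 1))) {a t c : ℝ} {n : ℕ}
    (ha : 0 ≤ a) (hat : a ≤ t) (htT : t ≤ T)
    (hagree : ∀ s ∈ Icc 0 a, EqOn (G s) (G' s) (unitBox (k + 1)))
    (hbound : ∀ s ∈ Icc a T, ∀ z ∈ unitBox (k + 1), |G s z - G' s z| ≤ c * (s - a) ^ n)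
    {x : Fin k → ℝ} (hx : x ∈ unitBox k) :
    |duhamelTerm k G t x - duhamelTerm k G' t x| ≤ k * (c * (t - a) ^ (n + 1) / (n + 1)) := by
  rw [duhamelTerm, duhamelTerm, ← Finset.sum_sub_distrib]
  refine (Finset.abs_sum_le_sum_abs _ _).trans ?_
  calc ∑ i : Fin k, |_| ≤ ∑ _i : Fin k, c * (t - a) ^ (n + 1) / (n + 1) :=
        Finset.sum_le_sum fun i _ => abs_integral_Ptk_sub_le (hG.uncurry_snoc_self i)
          (hG'.uncurry_snoc_self i) ha hat htT
          (fun s hs z hz => hagree s hs (snoc_self_mem_unitBox hz i))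
          (fun s hs z hz => hbound s hs _ (snoc_self_mem_unitBox hz i)) hx
    _ = k * (c * (t - a) ^ (n + 1) / (n + 1)) := by simp

lemma tendsto_pow_mul_pow_div_factorial (k : ℕ) {C r : ℝ} (hC : 0 ≤ C) (hr : 0 ≤ r)
    (hCr : C * exp 1 * r < 1) :
    Tendsto (fun n : ℕ => C ^ (k + n) * ((k : ℝ) + n) ^ n * r ^ n / n !) atTop (𝓝 0) := by
  have hgeom : Tendsto (fun n : ℕ => (C * exp 1) ^ k * (C * exp 1 * r) ^ n) atTop (𝓝 0) := by
    simpa using (tendsto_pow_atTop_nhds_zero_of_lt_one (by positivity) hCr).const_mul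
      ((C * exp 1) ^ k)
  refine squeeze_zero (fun n => by positivity) (fun n => ?_) hgeom
  have hexp : ((k : ℝ) + n) ^ n / n ! ≤ exp 1 ^ (k + n) := by
    rw [← Real.exp_nat_mul, mul_one]; push_cast
    exact Real.pow_div_factorial_le_exp _ (by positivity) n
  calc C ^ (k + n) * ((k : ℝ) + n) ^ n * r ^ n / n !
      = C ^ (k + n) * r ^ n * (((k : ℝ) + n) ^ n / n !) := by ring
    _ ≤ C ^ (k + n) * r ^ n * exp 1 ^ (k + n) := by gcongr
    _ = (C * exp 1) ^ k * (C * exp 1 * r) ^ n := by ring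

lemma forall_mem_Icc_of_step {p : ℝ → Prop} {T h : ℝ} (hh : 0 < h) (h0 : p 0)
    (hstep : ∀ a ∈ Icc 0 T, (∀ s ∈ Icc 0 a, p s) → ∀ s ∈ Icc 0 T, s ≤ a + h → p s) :
    ∀ s ∈ Icc 0 T, p s := by
  suffices hm : ∀ m : ℕ, ∀ s ∈ Icc 0 T, s ≤ m * h → p s by
    intro s hs
    obtain ⟨m, hm'⟩ := exists_nat_ge (s / h)
    exact hm m s hs ((div_le_iff₀ hh).1 hm')
  intro m
  induction m with
  | zero =>
    intro s hs hs0
    rwa [le_antisymm (by simpa using hs0) hs.1]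
  | succ m ih =>
    intro s hs hsm
    rcases le_total (m * h) T with hmT | hTm
    · exact hstep (m * h) ⟨by positivity, hmT⟩ (fun s' hs' => ih s' ⟨hs'.1, hs'.2.trans hmT⟩ hs'.2)
        s hs (by push_cast at hsm; linarith)
    · exact ih s hs (hs.2.trans hTm)

section Hierarchy

variable {C T : ℝ} {γ γ' : (k : ℕ) → ℝ → (Fin k → ℝ) → ℝ}

lemma SatisfiesLimitingHierarchy.sub_eq (hγ : SatisfiesLimitingHierarchy T γ)
    (hγ' : SatisfiesLimitingHierarchy T γ') {k : ℕ} (hk : 1 ≤ k) (h0 : γ k 0 = γ' k 0) {t : ℝ}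
    (ht : t ∈ Icc 0 T) {x : Fin k → ℝ} (hx : x ∈ unitBox k) :
    γ k t x - γ' k t x = duhamelTerm k (γ' (k + 1)) t x - duhamelTerm k (γ (k + 1)) t x := by
  rw [hγ.2 k hk t ht x hx, hγ'.2 k hk t ht x hx, h0, duhamelTerm, duhamelTerm]
  ring

variable (hγ : SatisfiesLimitingHierarchy T γ) (hγ' : SatisfiesLimitingHierarchy T γ')
  (h0 : ∀ k, 1 ≤ k → γ k 0 = γ' k 0)
  (hb : ∀ k, 1 ≤ k → ∀ t ∈ Icc 0 T, ∀ x ∈ unitBox k, |γ k t x| ≤ C ^ k)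
  (hb' : ∀ k, 1 ≤ k → ∀ t ∈ Icc 0 T, ∀ x ∈ unitBox k, |γ' k t x| ≤ C ^ k)
include hγ hγ' h0 hb hb'

lemma abs_sub_le_of_agree (hC : 0 ≤ C) {a : ℝ} (ha : a ∈ Icc 0 T)
    (hagree : ∀ s ∈ Icc 0 a, ∀ k, 1 ≤ k → ∀ x ∈ unitBox k, γ k s x = γ' k s x) (n : ℕ) :
    ∀ k, 1 ≤ k → ∀ t ∈ Icc a T, ∀ x ∈ unitBox k,
      |γ k t x - γ' k t x| ≤ 2 * C ^ (k + n) * ((k : ℝ) + n) ^ n * (t - a) ^ n / n ! := by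
  induction n with
  | zero =>
    intro k hk t ht x hx
    have htT : t ∈ Icc 0 T := ⟨ha.1.trans ht.1, ht.2⟩
    simpa [two_mul] using
      (abs_sub _ _).trans (add_le_add (hb k hk t htT x hx) (hb' k hk t htT x hx))
  | succ n ih =>
    intro k hk t ht x hx
    rw [hγ.sub_eq hγ' hk (h0 k hk) ⟨ha.1.trans ht.1, ht.2⟩ hx]
    set c : ℝ := 2 * C ^ (k + 1 + n) * ((k : ℝ) + 1 + n) ^ n / (n ! : ℝ)
    refine (abs_duhamelTerm_sub_le (c := c) (n := n) (hγ'.1 (k + 1) (by omega))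
      (hγ.1 (k + 1) (by omega)) ha.1 ht.1 ht.2 (fun s hs z hz => (hagree s hs (k + 1) (by omega) z hz).symm)
      (fun s hs z hz => ?_) hx).trans ?_
    · rw [abs_sub_comm]
      exact (ih (k + 1) (by omega) s hs z hz).trans_eq (by push_cast; ring)
    set A : ℝ :=
      2 * C ^ (k + n + 1) * ((k : ℝ) + n + 1) ^ n * (t - a) ^ (n + 1) / (n + 1) / (n ! : ℝ)
    have hA : 0 ≤ A := by have := sub_nonneg.2 ht.1; positivity
    calc (k : ℝ) * (c * (t - a) ^ (n + 1) / (n + 1)) = A * k := by simp only [c, A]; ring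
      _ ≤ A * (k + n + 1) := by gcongr; linarith
      _ = _ := by rw [Nat.factorial_succ, Nat.cast_mul, ← div_div]; push_cast; ring

lemma eq_of_agree_of_le_add (hC : 0 < C) {a : ℝ} (ha : a ∈ Icc 0 T)
    (hagree : ∀ s ∈ Icc 0 a, ∀ k, 1 ≤ k → ∀ x ∈ unitBox k, γ k s x = γ' k s x) {t : ℝ}
    (ht : t ∈ Icc 0 T) (hta : t ≤ a + (3 * C)⁻¹) :
    ∀ k, 1 ≤ k → ∀ x ∈ unitBox k, γ k t x = γ' k t x := by
  intro k hk x hx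
  rcases le_total t a with hta' | hat
  · exact hagree t ⟨ht.1, hta'⟩ k hk x hx
  have hCr : C * exp 1 * (t - a) < 1 :=
    calc C * exp 1 * (t - a) ≤ C * exp 1 * (3 * C)⁻¹ := by gcongr; linarith
      _ = exp 1 / 3 := by field_simp
      _ < 1 := by linarith [Real.exp_one_lt_three]
  have hlim := (tendsto_pow_mul_pow_div_factorial k hC.le (sub_nonneg.2 hat) hCr).const_mul 2
  rw [mul_zero] at hlim
  have hle : |γ k t x - γ' k t x| ≤ 0 := ge_of_tendsto' hlim fun n =>
    (abs_sub_le_of_agree hγ hγ' h0 hb hb' hC.le ha hagree n k hk t ⟨hat, ht.2⟩ x hx).trans_eq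
      (by ring)
  exact sub_eq_zero.1 (abs_nonpos_iff.1 hle)

end Hierarchy

/-- uniqueness for the limiting BBGKY hierarchy among families that are
bounded by `C^k` and share the same initial data. -/
theorem limiting_hierarchy_uniqueness :
    ∀ C : ℝ, 1 ≤ C → ∀ T > (0:ℝ),
      ∀ γ γ' : (k : ℕ) → ℝ → (Fin k → ℝ) → ℝ,
        SatisfiesLimitingHierarchy T γ → SatisfiesLimitingHierarchy T γ' →
        (∀ k : ℕ, 1 ≤ k → γ k 0 = γ' k 0) →
        (∀ k : ℕ, 1 ≤ k → ∀ t ∈ Set.Icc (0:ℝ) T, ∀ x ∈ unitBox k, |γ k t x| ≤ C ^ k) →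
        (∀ k : ℕ, 1 ≤ k → ∀ t ∈ Set.Icc (0:ℝ) T, ∀ x ∈ unitBox k, |γ' k t x| ≤ C ^ k) →
        ∀ k : ℕ, 1 ≤ k → ∀ t ∈ Set.Icc (0:ℝ) T, ∀ x ∈ unitBox k,
          γ k t x = γ' k t x := by
  intro C hC T _ γ γ' hγ hγ' h0 hb hb' k hk t ht x hx
  refine forall_mem_Icc_of_step (p := fun s => ∀ k, 1 ≤ k → ∀ x ∈ unitBox k, γ k s x = γ' k s x)
    (h := (3 * C)⁻¹) (by positivity) (fun k hk x _ => congrFun (h0 k hk) x)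
    (fun a ha hagree s hs hsa => ?_) t ht k hk x hx
  exact eq_of_agree_of_le_add hγ hγ' h0 hb hb' (by linarith) ha hagree hs hsa
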